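/- Let f : ℝ^d → ℝ be twice continuously differentiable with H-Lipschitz continuous Hessian, where H > 0. Fix x ∈ ℝ^d and u > 0, and suppose ỹ ∈ ℝ^d satisfies the first-order stationarity condition ∇f(x) + ∇²f(x)(ỹ − x) + (Hu/2)(ỹ − x) = 0. Then, with r̃ = ‖ỹ − x‖, one has ‖∇f(ỹ)‖ ≤ (H/2) · r̃ · (r̃ + u). -/

import Mathlib

open Set

section TaylorRemainder

variable {E F : Type*} [NormedAddCommGroup E] [NormedSpace ℝ E]
  [NormedAddCommGroup F] [NormedSpace ℝ F]

/-- Along `t ↦ x + t • (y - x)` the remainder's derivative has norm at most `H t ‖y - x‖²`, which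
integrates to the factor `1 / 2`. -/
theorem norm_sub_sub_fderiv_apply_le_of_norm_fderiv_sub_le {g : E → F} (hg : Differentiable ℝ g)
    {H : ℝ} {x : E} (hlip : ∀ z, ‖fderiv ℝ g z - fderiv ℝ g x‖ ≤ H * ‖z - x‖) (y : E) :
    ‖g y - g x - fderiv ℝ g x (y - x)‖ ≤ H / 2 * ‖y - x‖ ^ 2 := by
  set v := y - x
  set A := fderiv ℝ g x
  set ψ : ℝ → F := fun t => g (x + t • v) - g x - t • A v with hψ
  have hψ' (t : ℝ) : HasDerivAt ψ (fderiv ℝ g (x + t • v) v - A v) t := by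
    have hline : HasDerivAt (fun t : ℝ => x + t • v) v t := by
      simpa using ((hasDerivAt_id t).smul_const v).const_add x
    have hlin : HasDerivAt (fun t : ℝ => t • A v) (A v) t := by
      simpa using (hasDerivAt_id t).smul_const (A v)
    exact (((hg _).hasFDerivAt.comp_hasDerivAt t hline).sub_const (g x)).sub hlin
  have hderiv_le (t : ℝ) (ht : t ∈ Ico (0 : ℝ) 1) :
      ‖fderiv ℝ g (x + t • v) v - A v‖ ≤ H * ‖v‖ ^ 2 * t :=
    calc ‖fderiv ℝ g (x + t • v) v - A v‖ ≤ ‖fderiv ℝ g (x + t • v) - A‖ * ‖v‖ :=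
          (fderiv ℝ g (x + t • v) - A).le_opNorm v
      _ ≤ H * ‖t • v‖ * ‖v‖ := by
          gcongr
          simpa using hlip (x + t • v)
      _ = H * ‖v‖ ^ 2 * t := by rw [norm_smul, Real.norm_of_nonneg ht.1]; ring
  have hbound : ‖ψ 1‖ ≤ H * ‖v‖ ^ 2 * 1 ^ 2 / 2 := by
    refine image_norm_le_of_norm_deriv_right_le_deriv_boundary
      (B := fun t => H * ‖v‖ ^ 2 * t ^ 2 / 2) (B' := fun t => H * ‖v‖ ^ 2 * t)
      (fun t _ => (hψ' t).continuousAt.continuousWithinAt) (fun t _ => (hψ' t).hasDerivWithinAt)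
      (by simp [hψ]) (fun t => ?_) hderiv_le (by norm_num)
    exact (((hasDerivAt_pow 2 t).const_mul (H * ‖v‖ ^ 2)).div_const 2).congr_deriv (by ring)
  calc ‖g y - g x - A v‖ = ‖ψ 1‖ := by simp [hψ, v]
    _ ≤ H / 2 * ‖v‖ ^ 2 := hbound.trans_eq (by ring)

end TaylorRemainder

theorem ContDiff.differentiable_gradient {F : Type*} [NormedAddCommGroup F]
    [InnerProductSpace ℝ F] [CompleteSpace F] {f : F → ℝ} (hf : ContDiff ℝ 2 f) :
    Differentiable ℝ (gradient f) :=
  ((InnerProductSpace.toDual ℝ F).symm.contDiff.comp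
    (hf.fderiv_right (m := 1) (by norm_num))).differentiable one_ne_zero

/-- Let `f : ℝ^d → ℝ` be twice continuously differentiable with `H`-Lipschitz
continuous Hessian, `H > 0`. Fix `x` and `u > 0`, and suppose `yt` satisfies the first-order
stationarity condition `∇f(x) + ∇²f(x)(yt − x) + (Hu/2)(yt − x) = 0`. Then, with
`r̃ = ‖yt − x‖`, one has `‖∇f(yt)‖ ≤ (H/2)·r̃·(r̃ + u)`. -/
theorem stmt_8 {d : ℕ} (f : EuclideanSpace ℝ (Fin d) → ℝ)
    (hf : ContDiff ℝ 2 f) (H : ℝ) (hH : 0 < H)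
    (hhess : ∀ x y, ‖fderiv ℝ (gradient f) x - fderiv ℝ (gradient f) y‖ ≤ H * ‖x - y‖)
    (x : EuclideanSpace ℝ (Fin d)) (u : ℝ) (hu : 0 < u)
    (yt : EuclideanSpace ℝ (Fin d))
    (hstat : gradient f x + (fderiv ℝ (gradient f) x) (yt - x) + (H * u / 2) • (yt - x) = 0) :
    ‖gradient f yt‖ ≤ H / 2 * ‖yt - x‖ * (‖yt - x‖ + u) := by
  have hremainder := norm_sub_sub_fderiv_apply_le_of_norm_fderiv_sub_le
    hf.differentiable_gradient (fun z => hhess z x) yt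
  have hdecomp : gradient f yt =
      (gradient f yt - gradient f x - fderiv ℝ (gradient f) x (yt - x)) - (H * u / 2) • (yt - x) := by
    rw [← sub_eq_zero, ← hstat]; abel
  calc ‖gradient f yt‖
      = ‖(gradient f yt - gradient f x - fderiv ℝ (gradient f) x (yt - x))
          - (H * u / 2) • (yt - x)‖ := congrArg norm hdecomp
    _ ≤ ‖gradient f yt - gradient f x - fderiv ℝ (gradient f) x (yt - x)‖
        + ‖(H * u / 2) • (yt - x)‖ := norm_sub_le _ _
    _ ≤ H / 2 * ‖yt - x‖ ^ 2 + H * u / 2 * ‖yt - x‖ := by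
        rw [norm_smul, Real.norm_of_nonneg (by positivity)]
        exact add_le_add_left hremainder _
    _ = H / 2 * ‖yt - x‖ * (‖yt - x‖ + u) := by ring
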